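/- arXiv:1705.07545 — 2 statements merged into one kernel-verified Lean document; each statement's English description precedes it below -/
import Mathlib

section
/- If n ≥ 4 and S ⊆ {3,4,...,n-1}, then the set of cycle lengths of G_n(S) is exactly {n} ∪ S ∪ {n+2-a : a ∈ S} ∪ {b-a+2 : a,b ∈ S, b > a}; that is, G_n(S) has a cycle of length k if and only if k lies in this union. -/
/-- The cycle `C_n` on vertex set `Fin n`, where label `i` represents the integer `i + 1`;
edges join consecutive integers mod `n` (i.e. `{i, i+1}` for `1 ≤ i ≤ n - 1` and `{n, 1}`). -/
def cycG (n : ℕ) : SimpleGraph (Fin n) :=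
  SimpleGraph.fromRel (fun i j => (i.val + 1) % n = j.val)

/-- The graph `G_n(S)`: the cycle `C_n` together with a chord `{1, a}` for each `a ∈ S`
(vertex label `i` represents the integer `i + 1`, so the integer vertex `1` is label `0`
and the integer vertex `a` is label `a - 1`). -/
def GnS (n : ℕ) (S : Finset ℕ) : SimpleGraph (Fin n) :=
  SimpleGraph.fromRel (fun i j => (i.val + 1) % n = j.val ∨ (i.val = 0 ∧ j.val + 1 ∈ S))

/-!
Removing vertex `0` (the paper's vertex `1`) from `G_n(S)` leaves the path `1 - 2 - ⋯ - (n-1)`,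
on which a path from `x` to `y` has length `|x - y|`. So every cycle passes through `0` and
consists of two edges `0x`, `0y` closed up by the segment between `x` and `y`: the cycle lengths
are exactly the numbers `y - x + 2` for neighbours `x < y` of `0`. These neighbours are `1`,
`n - 1` and `a - 1` for `a ∈ S`, and their pairs give the four families of lengths.
-/

namespace SimpleGraph.Walk

variable {V : Type*} {G : SimpleGraph V}

theorem IsCycle.exists_isPath_length_add_two {z : V} {c : G.Walk z z} (hc : c.IsCycle) :
    ∃ v w, G.Adj z v ∧ G.Adj z w ∧
      ∃ r : G.Walk v w, r.IsPath ∧ z ∉ r.support ∧ c.length = r.length + 2 := by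
  cases c with
  | nil => simp at hc
  | @cons _ v _ h q =>
    have hq := ((cons_isCycle_iff q h).mp hc).1
    have hq_nil := not_nil_of_isCycle_cons hc
    have hpen := adj_penultimate hq_nil
    have hq' : (q.dropLast.concat hpen).IsPath := by rwa [concat_dropLast]
    obtain ⟨hr, hzr⟩ := (concat_isPath_iff hpen).mp hq'
    refine ⟨v, q.penultimate, h, hpen.symm, q.dropLast, hr, hzr, ?_⟩
    rw [length_cons, ← length_dropLast_add_one hq_nil]

theorem IsPath.isCycle_cons_concat {z v w : V} {r : G.Walk v w} (hr : r.IsPath)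
    (hzr : z ∉ r.support) (hvw : v ≠ w) (hv : G.Adj z v) (hw : G.Adj w z) :
    (cons hv (r.concat hw)).IsCycle := by
  refine (cons_isCycle_iff _ hv).mpr ⟨hr.concat hzr hw, ?_⟩
  rw [edges_concat, List.concat_eq_append, List.mem_append, List.mem_singleton, not_or]
  refine ⟨fun he => hzr (r.fst_mem_support_of_mem_edges he), fun he => ?_⟩
  rcases Sym2.eq_iff.mp he with ⟨rfl, -⟩ | ⟨-, rfl⟩
  · exact hw.ne rfl
  · exact hvw rfl

section Labelling

variable {f : V → ℕ} {P : V → Prop}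
  (hstep : ∀ ⦃x y⦄, P x → P y → G.Adj x y → f x + 1 = f y ∨ f y + 1 = f x)
include hstep

theorem lt_of_forall_ne {a b : V} {c : ℕ} (q : G.Walk a b) (hP : ∀ x ∈ q.support, P x)
    (hc : ∀ x ∈ q.support, f x ≠ c) (ha : c < f a) : c < f b := by
  induction q with
  | nil => exact ha
  | cons h q ih =>
    simp only [support_cons, List.mem_cons, forall_eq_or_imp] at hP hc
    have := hstep hP.1 (hP.2 _ q.start_mem_support) h
    have := hc.2 _ q.start_mem_support
    exact ih hP.2 hc.2 (by omega)

theorem IsPath.length_add_eq_or (hf : Function.Injective f) {a b : V} {q : G.Walk a b}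
    (hq : q.IsPath) (hP : ∀ x ∈ q.support, P x) :
    q.length + f a = f b ∨ q.length + f b = f a := by
  induction q with
  | nil => simp
  | @cons u v w h q ih =>
    obtain ⟨hq, hu⟩ := (cons_isPath_iff h q).mp hq
    simp only [support_cons, List.mem_cons, forall_eq_or_imp] at hP
    have hne : ∀ x ∈ q.support, f x ≠ f u := fun x hx e => hu (hf e ▸ hx)
    have hw := hne w q.end_mem_support
    have := ih hq hP.2
    rw [length_cons]
    rcases hstep hP.1 (hP.2 _ q.start_mem_support) h with hup | hdown
    · have := lt_of_forall_ne hstep q hP.2 hne (by omega)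
      omega
    · have : f w < f u := by
        by_contra! hle
        have := lt_of_forall_ne hstep q.reverse (by simpa using hP.2) (by simpa using hne)
          (lt_of_le_of_ne hle hw.symm)
        omega
      omega

theorem IsCycle.exists_mem_support_not (hf : Function.Injective f) {a : V} {c : G.Walk a a}
    (hc : c.IsCycle) : ∃ x ∈ c.support, ¬ P x := by
  by_contra! hP
  cases c with
  | nil => simp at hc
  | cons h q =>
    have hq := ((cons_isCycle_iff q h).mp hc).1
    simp only [support_cons, List.mem_cons, forall_eq_or_imp] at hP
    have := hq.length_add_eq_or hstep hf hP.2
    have := hstep hP.1 (hP.2 _ q.start_mem_support) h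
    have := hc.three_le_length
    rw [length_cons] at this
    omega

end Labelling

end SimpleGraph.Walk

namespace SimpleGraph

open Walk

variable {n : ℕ} {G : SimpleGraph (Fin n)}

theorem exists_isPath_of_le {x y : Fin n} (hxy : x ≤ y)
    (hsucc : ∀ i j : Fin n, x ≤ i → i.val + 1 = j.val → G.Adj i j) :
    ∃ r : G.Walk x y, r.IsPath ∧ r.length = y.val - x.val ∧ ∀ v ∈ r.support, x ≤ v ∧ v ≤ y := by
  obtain ⟨d, hd⟩ := Nat.exists_eq_add_of_le (Fin.le_def.mp hxy)
  induction d generalizing y with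
  | zero =>
    obtain rfl : y = x := Fin.ext hd
    exact ⟨nil, IsPath.nil, by simp, by simp⟩
  | succ d ih =>
    let y' : Fin n := ⟨x.val + d, by omega⟩
    obtain ⟨r, hr, hlen, hsupp⟩ := ih (y := y') (Fin.le_def.mpr (by simp [y'])) rfl
    have hadj : G.Adj y' y := hsucc _ _ (hsupp y' r.end_mem_support).1 (by simp [y']; omega)
    have hy : y ∉ r.support := fun hy => by
      have := Fin.le_def.mp (hsupp y hy).2
      simp [y'] at this; omega
    refine ⟨r.concat hadj, hr.concat hy hadj, by simp [hlen, y']; omega, fun v hv => ?_⟩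
    rw [support_concat, List.mem_append, List.mem_singleton] at hv
    rcases hv with hv | rfl
    · obtain ⟨h1, h2⟩ := hsupp v hv
      exact ⟨h1, h2.trans (Fin.le_def.mpr (by simp [y']; omega))⟩
    · exact ⟨hxy, le_rfl⟩

section Fan

variable [NeZero n]
  (hG : ∀ i j : Fin n, i ≠ 0 → j ≠ 0 → (G.Adj i j ↔ i.val + 1 = j.val ∨ j.val + 1 = i.val))
include hG

theorem zero_mem_support_of_isCycle {u : Fin n} {c : G.Walk u u} (hc : c.IsCycle) :
    0 ∈ c.support := by
  obtain ⟨x, hx, hx0⟩ := hc.exists_mem_support_not (f := Fin.val) (P := (· ≠ 0))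
    (fun x y hx hy h => (hG x y hx hy).mp h) Fin.val_injective
  rwa [not_not.mp hx0] at hx

theorem exists_isCycle_length_iff {k : ℕ} :
    (∃ (u : Fin n) (c : G.Walk u u), c.IsCycle ∧ c.length = k) ↔
      ∃ x y : Fin n, x < y ∧ G.Adj 0 x ∧ G.Adj 0 y ∧ k = y.val - x.val + 2 := by
  constructor
  · rintro ⟨u, c, hc, rfl⟩
    have hc0 := hc.rotate (zero_mem_support_of_isCycle hG hc)
    obtain ⟨v, w, hv, hw, r, hr, h0r, hlen⟩ := hc0.exists_isPath_length_add_two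
    have h3 := hc0.three_le_length
    rw [length_rotate] at hlen h3
    have hP : ∀ x ∈ r.support, x ≠ 0 := fun x hx e => h0r (e ▸ hx)
    rcases hr.length_add_eq_or (fun x y hx hy h => (hG x y hx hy).mp h) Fin.val_injective hP
      with h | h
    · exact ⟨v, w, Fin.lt_def.mpr (by omega), hv, hw, by omega⟩
    · exact ⟨w, v, Fin.lt_def.mpr (by omega), hw, hv, by omega⟩
  · rintro ⟨x, y, hxy, hx, hy, rfl⟩
    have hx0 : x ≠ 0 := hx.ne'
    have hsucc : ∀ i j : Fin n, x ≤ i → i.val + 1 = j.val → G.Adj i j := by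
      intro i j hi hij
      refine (hG i j ?_ ?_).mpr (Or.inl hij)
      · rintro rfl
        exact hx0 (le_antisymm hi (Fin.zero_le x))
      · exact Fin.val_ne_zero_iff.mp (by omega)
    obtain ⟨r, hr, hlen, hsupp⟩ := exists_isPath_of_le hxy.le hsucc
    have h0r : 0 ∉ r.support := fun h => hx0 (le_antisymm (hsupp 0 h).1 (Fin.zero_le x))
    exact ⟨0, cons hx (r.concat hy.symm), hr.isCycle_cons_concat h0r hxy.ne hx hy.symm,
      by simp [hlen]⟩

end Fan

end SimpleGraph

section GnS

variable {n : ℕ} {S : Finset ℕ}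

theorem add_one_mod_eq_iff {i j : ℕ} (hi : i < n) (hj : j < n) :
    (i + 1) % n = j ↔ i + 1 = j ∨ i + 1 = n ∧ j = 0 := by
  rcases Nat.lt_or_ge (i + 1) n with h | h
  · rw [Nat.mod_eq_of_lt h]
    omega
  · rw [show i + 1 = n by omega, Nat.mod_self]
    omega

theorem GnS_adj_iff_of_ne_zero [NeZero n] {i j : Fin n} (hi : i ≠ 0) (hj : j ≠ 0) :
    (GnS n S).Adj i j ↔ i.val + 1 = j.val ∨ j.val + 1 = i.val := by
  rw [← Fin.val_ne_zero_iff] at hi hj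
  rw [GnS, SimpleGraph.fromRel_adj, add_one_mod_eq_iff i.isLt j.isLt,
    add_one_mod_eq_iff j.isLt i.isLt, Fin.ne_iff_vne]
  omega

theorem GnS_adj_zero_iff [NeZero n] (hn : 1 < n) (hS : 1 ∉ S) {v : Fin n} :
    (GnS n S).Adj 0 v ↔ v.val = 1 ∨ v.val = n - 1 ∨ v.val + 1 ∈ S := by
  rw [GnS, SimpleGraph.fromRel_adj, Fin.ne_iff_vne, Fin.val_zero,
    add_one_mod_eq_iff (Nat.zero_lt_of_lt hn) v.isLt,
    add_one_mod_eq_iff v.isLt (Nat.zero_lt_of_lt hn)]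
  grind

theorem exists_pair_sub_add_two_iff (hn : 3 ≤ n) (hS : S ⊆ Finset.Icc 3 (n - 1)) {k : ℕ} :
    (∃ x y : Fin n, x < y ∧ (x.val = 1 ∨ x.val = n - 1 ∨ x.val + 1 ∈ S) ∧
      (y.val = 1 ∨ y.val = n - 1 ∨ y.val + 1 ∈ S) ∧ k = y.val - x.val + 2) ↔
      (k = n ∨ k ∈ S ∨ (∃ a ∈ S, k = n + 2 - a) ∨
        (∃ a ∈ S, ∃ b ∈ S, a < b ∧ k = b - a + 2)) := by
  have hS' : ∀ a ∈ S, 3 ≤ a ∧ a ≤ n - 1 := fun a ha => Finset.mem_Icc.mp (hS ha)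
  constructor
  · rintro ⟨x, y, hxy, hx, hy, rfl⟩
    rw [Fin.lt_def] at hxy
    rcases hx with hx | hx | hx <;> rcases hy with hy | hy | hy
    · omega
    · left; omega
    · right; left; rwa [show y.val - x.val + 2 = y.val + 1 by omega]
    · omega
    · omega
    · have := hS' _ hy; omega
    · have := hS' _ hx; omega
    · right; right; left; exact ⟨_, hx, by omega⟩
    · right; right; right; exact ⟨_, hx, _, hy, by omega, by omega⟩
  · rintro (rfl | hk | ⟨a, ha, rfl⟩ | ⟨a, ha, b, hb, hab, rfl⟩)
    · exact ⟨⟨1, by omega⟩, ⟨k - 1, by omega⟩, Fin.lt_def.mpr (by simp; omega), by simp, by simp,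
        by simp; omega⟩
    · have := hS' _ hk
      exact ⟨⟨1, by omega⟩, ⟨k - 1, by omega⟩, Fin.lt_def.mpr (by simp; omega), by simp,
        by simp [Nat.sub_add_cancel (by omega : 1 ≤ k), hk], by simp; omega⟩
    · have := hS' _ ha
      exact ⟨⟨a - 1, by omega⟩, ⟨n - 1, by omega⟩, Fin.lt_def.mpr (by simp; omega),
        by simp [Nat.sub_add_cancel (by omega : 1 ≤ a), ha], by simp, by simp; omega⟩
    · have := hS' _ ha
      have := hS' _ hb
      exact ⟨⟨a - 1, by omega⟩, ⟨b - 1, by omega⟩, Fin.lt_def.mpr (by simp; omega),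
        by simp [Nat.sub_add_cancel (by omega : 1 ≤ a), ha],
        by simp [Nat.sub_add_cancel (by omega : 1 ≤ b), hb], by simp; omega⟩

end GnS

/-- If `n ≥ 4` and `S ⊆ {3, ..., n-1}`, then `G_n(S)` has a cycle of length `k` if and only
if `k ∈ {n} ∪ S ∪ {n + 2 - a : a ∈ S} ∪ {b - a + 2 : a, b ∈ S, b > a}`. -/
theorem stmt7 (n : ℕ) (hn : 4 ≤ n) (S : Finset ℕ) (hS : S ⊆ Finset.Icc 3 (n - 1)) (k : ℕ) :
    (∃ (u : Fin n) (p : (GnS n S).Walk u u), p.IsCycle ∧ p.length = k) ↔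
      (k = n ∨ k ∈ S ∨ (∃ a ∈ S, k = n + 2 - a) ∨
        (∃ a ∈ S, ∃ b ∈ S, a < b ∧ k = b - a + 2)) := by
  have : NeZero n := ⟨by omega⟩
  have h1S : 1 ∉ S := fun h => by have := Finset.mem_Icc.mp (hS h); omega
  rw [SimpleGraph.exists_isCycle_length_iff fun i j hi hj => GnS_adj_iff_of_ne_zero hi hj]
  simp only [GnS_adj_zero_iff (show 1 < n by omega) h1S]
  exact exists_pair_sub_add_two_iff (by omega) hS
end

section
/- Let n ≥ 3 and let G be an n-vertex Hamiltonian graph with no two cycles of the same length, obtained from a cycle C_n by adding k chords. Call a pair of chords e, e' crossing if C_n together with e and e' forms a subdivision of K_4 (equivalently, their endpoints interleave along the cycle), and non-crossing otherwise. If c is the number of crossing pairs of chords, then 2c + (C(k,2) - c) ≤ n, i.e., C(k,2) + c ≤ n. -/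
/-- A graph on a finite vertex type is Hamiltonian if it has a cycle through all vertices,
i.e. a cycle whose length equals the number of vertices. -/
def IsHamiltonianGraph {V : Type*} [Fintype V] (G : SimpleGraph V) : Prop :=
  ∃ (u : V) (p : G.Walk u u), p.IsCycle ∧ p.length = Fintype.card V

/-- No two cycles of `G` have the same length: any two cycles with equal length are the same
cycle, i.e. have the same edge set. -/
def NoRepeatedCycleLength {V : Type*} (G : SimpleGraph V) : Prop :=
  ∀ (u v : V) (p : G.Walk u u) (q : G.Walk v v),
    p.IsCycle → q.IsCycle → p.length = q.length →
      {e | e ∈ p.edges} = {e | e ∈ q.edges}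

/-- Two chords `e = {a, b}` and `f = {c, d}` of the cycle `C_n` are crossing if their
endpoints interleave in the cyclic order of `C_n`; with endpoints listed so that `a < b`
and `c < d` in the linear order on labels, this means `a < c < b < d` (up to swapping the
roles of `e` and `f`). -/
def Crossing {n : ℕ} (e f : Sym2 (Fin n)) : Prop :=
  ∃ a b c d : Fin n,
    ((e = s(a, b) ∧ f = s(c, d)) ∨ (e = s(c, d) ∧ f = s(a, b))) ∧
      a.val < c.val ∧ c.val < b.val ∧ b.val < d.val

/-! Any two distinct chords `e, f` close, together with two arcs of `C_n`, a cycle of `G` whose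
chords are exactly `e` and `f`. When `e = {a, b}` and `f = {c, d}` cross, `a < c < b < d`, there
are two such cycles, `a → c → d → b → a` and `c → b → a → d → c` (the latter going around through
`{n - 1, 0}`), told apart by the cycle edge `{c, c + 1}`. Cycles with different chord sets are
different, so this gives `C(k, 2) + c` distinct cycles; by hypothesis their lengths are distinct
numbers in `[3, n]`, whence `C(k, 2) + c ≤ n - 2`. -/

theorem Set.ncard_add_ncard_le_of_rel {α β : Type*} [Nonempty α] {s : Set α} {t u : Set β}
    (R : β → α → Prop) (hs : s.Finite) (hR : ∀ x y y', R y x → R y' x → y = y')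
    (ht : ∀ y ∈ t, ∃ x ∈ s, R y x)
    (hu : ∀ y ∈ u, ∃ x₁ ∈ s, ∃ x₂ ∈ s, x₁ ≠ x₂ ∧ R y x₁ ∧ R y x₂) :
    t.ncard + u.ncard ≤ s.ncard := by
  choose! g hgs hgR using ht
  have hu' : ∀ y ∈ u, ∃ x ∈ s, R y x ∧ x ≠ g y := by
    intro y hy
    obtain ⟨x₁, h₁, x₂, h₂, hne, hR₁, hR₂⟩ := hu y hy
    by_cases hx : x₁ = g y
    · exact ⟨x₂, h₂, hR₂, fun h => hne (hx.trans h.symm)⟩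
    · exact ⟨x₁, h₁, hR₁, hx⟩
  choose! g' hg's hg'R hg'g using hu'
  have hinj : Set.InjOn g t := fun y hy y' hy' h => hR _ _ _ (hgR y hy) (h ▸ hgR y' hy')
  have hinj' : Set.InjOn g' u := fun y hy y' hy' h => hR _ _ _ (hg'R y hy) (h ▸ hg'R y' hy')
  have hdisj : Disjoint (g '' t) (g' '' u) := by
    refine Set.disjoint_left.2 ?_
    rintro _ ⟨y, hy, rfl⟩ ⟨y', hy', h⟩
    obtain rfl := hR _ _ _ (hg'R y' hy') (h ▸ hgR y hy)
    exact hg'g y' hy' h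
  have hsub : g '' t ∪ g' '' u ⊆ s :=
    Set.union_subset (Set.image_subset_iff.2 hgs) (Set.image_subset_iff.2 hg's)
  calc t.ncard + u.ncard = (g '' t ∪ g' '' u).ncard := by
        rw [Set.ncard_union_eq hdisj ((hs.subset hsub).subset Set.subset_union_left)
          ((hs.subset hsub).subset Set.subset_union_right), hinj.ncard_image,
          hinj'.ncard_image]
    _ ≤ s.ncard := Set.ncard_le_ncard hsub hs

theorem Sym2.ncard_setOf_mk_ne {α : Type*} (K : Set α) :
    {z : Sym2 α | ∃ e f, z = s(e, f) ∧ e ∈ K ∧ f ∈ K ∧ e ≠ f}.ncard = K.ncard.choose 2 := by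
  have : {z : Sym2 α | ∃ e f, z = s(e, f) ∧ e ∈ K ∧ f ∈ K ∧ e ≠ f} =
      Sym2.map (↑) '' (Sym2.diagSetᶜ : Set (Sym2 K)) := by
    ext z
    constructor
    · rintro ⟨e, f, rfl, he, hf, hef⟩
      exact ⟨s(⟨e, he⟩, ⟨f, hf⟩), by simpa using hef, rfl⟩
    · rintro ⟨w, hw, rfl⟩
      induction w using Sym2.ind with
      | h x y => exact ⟨x, y, rfl, x.2, y.2, fun h => hw (by simp [Subtype.ext h])⟩
  rw [this, Set.ncard_image_of_injective _ (Sym2.map.injective Subtype.val_injective),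
    Sym2.ncard_diagSet_compl, Nat.card_coe_set_eq]

namespace SimpleGraph

variable {V : Type*} {G : SimpleGraph V}

def cycleEdgeSets (G : SimpleGraph V) : Set (Set (Sym2 V)) :=
  {E | ∃ (u : V) (p : G.Walk u u), p.IsCycle ∧ p.edgeSet = E}

namespace Walk

theorem IsTrail.ncard_edgeSet {u v : V} {p : G.Walk u v} (hp : p.IsTrail) :
    p.edgeSet.ncard = p.length := by
  classical
  rw [edgeSet, ← List.coe_toFinset, Set.ncard_coe_finset,
    List.toFinset_card_of_nodup hp.edges_nodup, length_edges]

theorem IsCycle.length_le_card [Fintype V] {u : V} {p : G.Walk u u} (hp : p.IsCycle) :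
    p.length ≤ Fintype.card V := by
  simpa using hp.support_nodup.length_le_card

theorem isCycle_cons_append_cons {u v w x : V} {p : G.Walk u v} {q : G.Walk w x}
    (hp : p.IsPath) (hq : q.IsPath) (hpq : p.support.Disjoint q.support)
    (hvw : G.Adj v w) (hxu : G.Adj x u) (hne : s(v, w) ≠ s(x, u)) :
    (cons hxu (p.append (cons hvw q))).IsCycle := by
  rw [cons_isCycle_iff, isPath_def, support_append, support_cons, List.tail_cons, edges_append,
    edges_cons]
  refine ⟨List.nodup_append.2 ⟨hp.support_nodup, hq.support_nodup, fun a ha b hb hab => ?_⟩, ?_⟩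
  · exact hpq ha (hab ▸ hb)
  · simp only [List.mem_append, List.mem_cons, not_or]
    exact ⟨fun h => hpq (p.fst_mem_support_of_mem_edges h) q.end_mem_support, hne.symm,
      fun h => hpq p.start_mem_support (q.snd_mem_support_of_mem_edges h)⟩

end Walk

theorem ncard_cycleEdgeSets_le [Fintype V] (hG : NoRepeatedCycleLength G) :
    G.cycleEdgeSets.ncard ≤ Fintype.card V - 2 := by
  have hmaps : ∀ E ∈ G.cycleEdgeSets, E.ncard ∈ (Finset.Icc 3 (Fintype.card V) : Set ℕ) := by
    rintro _ ⟨u, p, hp, rfl⟩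
    rw [Finset.coe_Icc, Set.mem_Icc, hp.isTrail.ncard_edgeSet]
    exact ⟨hp.three_le_length, hp.length_le_card⟩
  have hinj : Set.InjOn Set.ncard G.cycleEdgeSets := by
    rintro _ ⟨u, p, hp, rfl⟩ _ ⟨v, q, hq, rfl⟩ hpq
    rw [hp.isTrail.ncard_edgeSet, hq.isTrail.ncard_edgeSet] at hpq
    exact hG u v p q hp hq hpq
  simpa using Set.ncard_le_ncard_of_injOn Set.ncard hmaps hinj (Finset.finite_toSet _)

end SimpleGraph

section CycleArcs

open SimpleGraph Fin.NatCast

variable {n : ℕ} [NeZero n]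

theorem Fin.eq_natCast_iff {k : ℕ} (hk : k < 2 * n) {z : Fin n} :
    z = (k : Fin n) ↔ z.val = k ∨ z.val + n = k := by
  rw [Fin.ext_iff, Fin.val_natCast]
  rcases lt_or_ge k n with h | h
  · rw [Nat.mod_eq_of_lt h]; omega
  · rw [Nat.mod_eq_sub_mod h, Nat.mod_eq_of_lt (by omega)]; omega

theorem Fin.natCast_eq_natCast_iff_of_lt {a b : ℕ} (ha : a < n) (hb : b < n) :
    (a : Fin n) = b ↔ a = b := by
  rw [Fin.ext_iff, Fin.val_cast_of_lt ha, Fin.val_cast_of_lt hb]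

theorem Sym2.mk_natCast_eq_mk_natCast_iff {a b c d : ℕ} (ha : a < n) (hb : b < n) (hc : c < n)
    (hd : d < n) :
    s((a : Fin n), (b : Fin n)) = s(↑c, ↑d) ↔ (a = c ∧ b = d) ∨ (a = d ∧ b = c) := by
  rw [Sym2.eq_iff, Fin.natCast_eq_natCast_iff_of_lt ha hc, Fin.natCast_eq_natCast_iff_of_lt hb hd,
    Fin.natCast_eq_natCast_iff_of_lt ha hd, Fin.natCast_eq_natCast_iff_of_lt hb hc]

theorem cycG_adj_natCast_succ (hn : 1 < n) (i : ℕ) :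
    (cycG n).Adj (i : Fin n) ((i + 1 : ℕ) : Fin n) := by
  rw [cycG, fromRel_adj, Fin.val_natCast, Fin.val_natCast, Nat.mod_add_mod]
  refine ⟨fun h => ?_, Or.inl rfl⟩
  have h' : i + 0 ≡ i + 1 [MOD n] := by simpa [Fin.ext_iff] using h
  replace h := (Nat.ModEq.add_left_cancel' i h').symm
  rw [Nat.ModEq, Nat.zero_mod, Nat.mod_eq_of_lt hn] at h
  exact one_ne_zero h

variable (hn : 1 < n)

def cycArc (s : ℕ) : (m : ℕ) → (cycG n).Walk (s : Fin n) ((s + m : ℕ) : Fin n)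
  | 0 => Walk.nil
  | m + 1 => (cycArc s m).concat (cycG_adj_natCast_succ hn (s + m))

variable {hn}

theorem mem_support_cycArc {s m : ℕ} (hs : s < n) (hm : m < n) {z : Fin n} :
    z ∈ (cycArc hn s m).support ↔ (s ≤ z.val ∧ z.val ≤ s + m) ∨ z.val + n ≤ s + m := by
  induction m with
  | zero =>
    rw [cycArc, Walk.support_nil, List.mem_singleton, Fin.eq_natCast_iff (by omega)]
    omega
  | succ m ih =>
    rw [cycArc, Walk.support_concat, List.mem_append, ih (by omega),
      List.mem_singleton, Fin.eq_natCast_iff (by omega)]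
    omega

theorem isPath_cycArc {s m : ℕ} (hs : s < n) (hm : m < n) : (cycArc hn s m).IsPath := by
  induction m with
  | zero => exact Walk.IsPath.nil
  | succ m ih =>
    rw [cycArc, Walk.isPath_def, Walk.support_concat, List.nodup_append]
    refine ⟨(ih (by omega)).support_nodup, List.nodup_singleton _, fun z hz w hw hzw => ?_⟩
    rw [List.mem_singleton] at hw
    rw [mem_support_cycArc hs (by omega)] at hz
    rw [← hzw, Fin.eq_natCast_iff (by omega)] at hw
    omega

theorem mk_mem_edgeSet_cycArc {s m i : ℕ} (hi : i < m) :
    s(((s + i : ℕ) : Fin n), ((s + i + 1 : ℕ) : Fin n)) ∈ (cycArc hn s m).edgeSet := by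
  induction m with
  | zero => omega
  | succ m ih =>
    rw [cycArc, Walk.edgeSet_concat, Set.mem_insert_iff]
    rcases Nat.lt_succ_iff_lt_or_eq.1 hi with h | rfl
    · exact Or.inr (ih h)
    · exact Or.inl rfl

theorem disjoint_support_cycArc {p m₁ r m₂ : ℕ} (hqr : p + m₁ < r) (htp : r + m₂ < p + n)
    (hr : r < n) : (cycArc hn p m₁).support.Disjoint (cycArc hn r m₂).support := by
  intro z h₁ h₂
  rw [mem_support_cycArc (by omega) (by omega)] at h₁ h₂
  omega

end CycleArcs

section TwoChordCycles

open SimpleGraph Fin.NatCast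

variable {n : ℕ} [NeZero n] (hn : 1 < n)

/-- Labels are read modulo `n`, so `t` may exceed `n`: the arc from `r` to `t` then runs through
the edge `{n - 1, 0}`. -/
def arcsWithChords (p q r t : ℕ) (e f : Sym2 (Fin n)) : Set (Sym2 (Fin n)) :=
  insert e (insert f ((cycArc hn p (q - p)).edgeSet ∪ (cycArc hn r (t - r)).edgeSet))

variable {G : SimpleGraph (Fin n)}

theorem arcsWithChords_mem_cycleEdgeSets_parallel (hsub : cycG n ≤ G) {p q r t : ℕ}
    (hpq : p ≤ q) (hqr : q < r) (hrt : r ≤ t) (htp : t < p + n) (hr : r < n)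
    (hqr' : G.Adj (q : Fin n) r) (htp' : G.Adj (t : Fin n) p)
    (hne : s((q : Fin n), (r : Fin n)) ≠ s((t : Fin n), (p : Fin n))) :
    arcsWithChords hn p q r t s(↑q, ↑r) s(↑t, ↑p) ∈ G.cycleEdgeSets := by
  obtain ⟨m₁, rfl⟩ := Nat.exists_eq_add_of_le hpq
  obtain ⟨m₂, rfl⟩ := Nat.exists_eq_add_of_le hrt
  refine ⟨_, _, Walk.isCycle_cons_append_cons
    ((isPath_cycArc (hn := hn) (by omega) (by omega)).mapLe hsub)
    ((isPath_cycArc (hn := hn) hr (by omega)).mapLe hsub) ?_ hqr' htp' hne, ?_⟩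
  · simpa only [Walk.support_mapLe_eq_support] using disjoint_support_cycArc hqr htp hr
  · simp only [arcsWithChords, Walk.edgeSet_cons, Walk.edgeSet_append,
      Walk.edgeSet_mapLe_eq_edgeSet]
    rw [Set.union_insert, Set.insert_comm, Nat.add_sub_cancel_left, Nat.add_sub_cancel_left]

theorem arcsWithChords_mem_cycleEdgeSets_crossed (hsub : cycG n ≤ G) {p q r t : ℕ}
    (hpq : p ≤ q) (hqr : q < r) (hrt : r ≤ t) (htp : t < p + n) (hr : r < n)
    (hqt : G.Adj (q : Fin n) t) (hrp : G.Adj (r : Fin n) p)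
    (hne : s((q : Fin n), (t : Fin n)) ≠ s((r : Fin n), (p : Fin n))) :
    arcsWithChords hn p q r t s(↑q, ↑t) s(↑r, ↑p) ∈ G.cycleEdgeSets := by
  obtain ⟨m₁, rfl⟩ := Nat.exists_eq_add_of_le hpq
  obtain ⟨m₂, rfl⟩ := Nat.exists_eq_add_of_le hrt
  refine ⟨_, _, Walk.isCycle_cons_append_cons
    ((isPath_cycArc (hn := hn) (by omega) (by omega)).mapLe hsub)
    ((isPath_cycArc (hn := hn) hr (by omega)).mapLe hsub).reverse ?_ hqt hrp hne, ?_⟩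
  · simpa only [Walk.support_reverse, Walk.support_mapLe_eq_support, List.disjoint_reverse_right]
      using disjoint_support_cycArc hqr htp hr
  · simp only [arcsWithChords, Walk.edgeSet_cons, Walk.edgeSet_append, Walk.edgeSet_reverse,
      Walk.edgeSet_mapLe_eq_edgeSet]
    rw [Set.union_insert, Set.insert_comm, Nat.add_sub_cancel_left, Nat.add_sub_cancel_left]

theorem arcsWithChords_sdiff_edgeSet {p q r t : ℕ} {e f : Sym2 (Fin n)}
    (he : e ∉ (cycG n).edgeSet) (hf : f ∉ (cycG n).edgeSet) :
    arcsWithChords hn p q r t e f \ (cycG n).edgeSet = {e, f} := by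
  have harcs : (cycArc hn p (q - p)).edgeSet ∪ (cycArc hn r (t - r)).edgeSet ⊆ (cycG n).edgeSet :=
    Set.union_subset (fun _ h => Walk.edges_subset_edgeSet _ h)
      (fun _ h => Walk.edges_subset_edgeSet _ h)
  rw [arcsWithChords, Set.insert_sdiff_of_notMem _ he, Set.insert_sdiff_of_notMem _ hf,
    Set.sdiff_eq_empty.2 harcs, insert_empty_eq]

theorem mk_mem_arcsWithChords {p q r t : ℕ} {e f : Sym2 (Fin n)} (hpq : p < q) :
    s((p : Fin n), ((p + 1 : ℕ) : Fin n)) ∈ arcsWithChords hn p q r t e f := by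
  have h := mk_mem_edgeSet_cycArc (hn := hn) (s := p) (m := q - p) (i := 0) (by omega)
  exact Set.mem_insert_of_mem _ (Set.mem_insert_of_mem _ (Or.inl (by simpa using h)))

theorem mk_succ_notMem_arcsWithChords {a b c d : ℕ} (hac : a < c) (hcb : c < b) (hbd : b < d)
    (hd : d < n) :
    s((c : Fin n), ((c + 1 : ℕ) : Fin n)) ∉ arcsWithChords hn a c b d s(↑c, ↑d) s(↑b, ↑a) := by
  have hc : c < n := by omega
  have hc₁ : c + 1 < n := by omega
  have hb : b < n := by omega
  have ha : a < n := by omega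
  rw [arcsWithChords, Set.mem_insert_iff, Set.mem_insert_iff, Set.mem_union, Walk.mem_edgeSet,
    Walk.mem_edgeSet]
  rintro (h | h | h | h)
  · rw [Sym2.mk_natCast_eq_mk_natCast_iff hc hc₁ hc hd] at h
    omega
  · rw [Sym2.mk_natCast_eq_mk_natCast_iff hc hc₁ hb ha] at h
    omega
  · have h := Walk.snd_mem_support_of_mem_edges _ h
    rw [mem_support_cycArc ha (by omega), Fin.val_cast_of_lt hc₁] at h
    omega
  · have h := Walk.fst_mem_support_of_mem_edges _ h
    rw [mem_support_cycArc hb (by omega), Fin.val_cast_of_lt hc] at h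
    omega

end TwoChordCycles

section Chords

open SimpleGraph Fin.NatCast

variable {n : ℕ} [NeZero n] {G : SimpleGraph (Fin n)}

theorem exists_lt_eq_mk_natCast {e : Sym2 (Fin n)} (he : ¬e.IsDiag) :
    ∃ a b : ℕ, a < b ∧ b < n ∧ e = s((a : Fin n), (b : Fin n)) := by
  induction e using Sym2.ind with
  | h u v =>
    rcases lt_trichotomy u v with h | rfl | h
    · exact ⟨u, v, h, v.2, by simp⟩
    · exact absurd rfl he
    · exact ⟨v, u, h, u.2, by simp [Sym2.eq_swap]⟩

theorem exists_mem_cycleEdgeSets_sdiff_eq_pair (hn : 1 < n) (hsub : cycG n ≤ G)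
    {e f : Sym2 (Fin n)} (he : e ∈ G.edgeSet \ (cycG n).edgeSet)
    (hf : f ∈ G.edgeSet \ (cycG n).edgeSet) (hef : e ≠ f) :
    ∃ E ∈ G.cycleEdgeSets, E \ (cycG n).edgeSet = {e, f} := by
  obtain ⟨a, b, hab, hb, rfl⟩ := exists_lt_eq_mk_natCast (G.not_isDiag_of_mem_edgeSet he.1)
  obtain ⟨c, d, hcd, hd, rfl⟩ := exists_lt_eq_mk_natCast (G.not_isDiag_of_mem_edgeSet hf.1)
  wlog hac : a ≤ c generalizing a b c d
  · rw [Set.pair_comm]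
    exact this c d hcd hd hf a b hab hb he hef.symm (by omega)
  have hba : s((b : Fin n), (a : Fin n)) = s(↑a, ↑b) := Sym2.eq_swap
  rcases le_or_gt b c with hbc | hcb
  · have hrot : ((a + n : ℕ) : Fin n) = a := by simp
    refine ⟨_, arcsWithChords_mem_cycleEdgeSets_parallel hn hsub (t := a + n) hbc hcd (by omega)
      (by omega) hd hf.1 (by rw [hrot]; exact he.1) (by rw [hrot]; exact hef.symm), ?_⟩
    rw [hrot, arcsWithChords_sdiff_edgeSet hn hf.2 he.2, Set.pair_comm]
  rcases le_or_gt d b with hdb | hbd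
  · refine ⟨_, arcsWithChords_mem_cycleEdgeSets_parallel hn hsub hac hcd hdb (by omega) hd
      hf.1 (G.adj_symm he.1) (by rwa [hba, ne_comm]), ?_⟩
    rw [hba, arcsWithChords_sdiff_edgeSet hn hf.2 he.2, Set.pair_comm]
  · refine ⟨_, arcsWithChords_mem_cycleEdgeSets_crossed hn hsub hac hcb hbd.le (by omega) hb
      hf.1 (G.adj_symm he.1) (by rwa [hba, ne_comm]), ?_⟩
    rw [hba, arcsWithChords_sdiff_edgeSet hn hf.2 he.2, Set.pair_comm]

theorem exists_ne_mem_cycleEdgeSets_of_lt (hn : 1 < n) (hsub : cycG n ≤ G) {a b c d : ℕ}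
    (hac : a < c) (hcb : c < b) (hbd : b < d) (hd : d < n)
    (he : s((a : Fin n), (b : Fin n)) ∈ G.edgeSet \ (cycG n).edgeSet)
    (hf : s((c : Fin n), (d : Fin n)) ∈ G.edgeSet \ (cycG n).edgeSet) :
    ∃ E₁ ∈ G.cycleEdgeSets, ∃ E₂ ∈ G.cycleEdgeSets, E₁ ≠ E₂ ∧
      E₁ \ (cycG n).edgeSet = {s(↑a, ↑b), s(↑c, ↑d)} ∧
      E₂ \ (cycG n).edgeSet = {s(↑a, ↑b), s(↑c, ↑d)} := by
  have hrot : ((a + n : ℕ) : Fin n) = a := by simp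
  have hba : s((b : Fin n), (a : Fin n)) = s(↑a, ↑b) := Sym2.eq_swap
  have hdc : s((d : Fin n), (c : Fin n)) = s(↑c, ↑d) := Sym2.eq_swap
  have hef : s((a : Fin n), (b : Fin n)) ≠ s(↑c, ↑d) := by
    rw [Ne, Sym2.mk_natCast_eq_mk_natCast_iff (by omega) (by omega) (by omega) hd]
    omega
  have hE₁ := arcsWithChords_mem_cycleEdgeSets_crossed hn hsub hac.le hcb hbd.le (by omega)
    (by omega) hf.1 (G.adj_symm he.1) (by rwa [hba, ne_comm])
  have hE₂ := arcsWithChords_mem_cycleEdgeSets_crossed hn hsub (t := a + n) hcb.le hbd (by omega)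
    (by omega) hd (by rw [hrot]; exact G.adj_symm he.1) (G.adj_symm hf.1) (by rwa [hrot, hba, hdc])
  refine ⟨_, hE₁, _, hE₂, fun h => mk_succ_notMem_arcsWithChords hn hac hcb hbd hd
    (h ▸ mk_mem_arcsWithChords hn hcb), ?_, ?_⟩
  · rw [hba, arcsWithChords_sdiff_edgeSet hn hf.2 he.2, Set.pair_comm]
  · rw [hrot, hba, hdc, arcsWithChords_sdiff_edgeSet hn he.2 hf.2]

theorem exists_ne_mem_cycleEdgeSets_of_crossing (hn : 1 < n) (hsub : cycG n ≤ G)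
    {e f : Sym2 (Fin n)} (he : e ∈ G.edgeSet \ (cycG n).edgeSet)
    (hf : f ∈ G.edgeSet \ (cycG n).edgeSet)
    (hcr : Crossing e f) :
    ∃ E₁ ∈ G.cycleEdgeSets, ∃ E₂ ∈ G.cycleEdgeSets, E₁ ≠ E₂ ∧
      E₁ \ (cycG n).edgeSet = {e, f} ∧ E₂ \ (cycG n).edgeSet = {e, f} := by
  obtain ⟨a, b, c, d, ⟨rfl, rfl⟩ | ⟨rfl, rfl⟩, hac, hcb, hbd⟩ := hcr
  · simpa using exists_ne_mem_cycleEdgeSets_of_lt hn hsub hac hcb hbd d.2 (by simpa using he)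
      (by simpa using hf)
  · rw [Set.pair_comm]
    simpa using exists_ne_mem_cycleEdgeSets_of_lt hn hsub hac hcb hbd d.2 (by simpa using hf)
      (by simpa using he)

end Chords

/-- Let `n ≥ 3` and let `G` be an `n`-vertex graph, obtained from the cycle `C_n` by adding
`k` chords, with no two cycles of the same length. If `c` is the number of (unordered)
crossing pairs of chords, then `2c + (C(k, 2) - c) ≤ n`, i.e. `C(k, 2) + c ≤ n`. -/
theorem stmt15 (n : ℕ) (hn : 3 ≤ n) (G : SimpleGraph (Fin n)) (hsub : cycG n ≤ G)
    (hnr : NoRepeatedCycleLength G) (k : ℕ)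
    (hk : (G.edgeSet \ (cycG n).edgeSet).ncard = k) (c : ℕ)
    (hc : Set.ncard {p : Sym2 (Sym2 (Fin n)) | ∃ e f : Sym2 (Fin n),
        p = s(e, f) ∧ e ∈ G.edgeSet \ (cycG n).edgeSet ∧
        f ∈ G.edgeSet \ (cycG n).edgeSet ∧ Crossing e f} = c) :
    Nat.choose k 2 + c ≤ n := by
  have : NeZero n := ⟨by omega⟩
  have hn₁ : 1 < n := by omega
  subst hk hc
  rw [← Sym2.ncard_setOf_mk_ne]
  calc _ ≤ G.cycleEdgeSets.ncard :=
        Set.ncard_add_ncard_le_of_rel (fun Q E => E \ (cycG n).edgeSet = {g | g ∈ Q})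
          (Set.toFinite _) (fun _ _ _ h h' => Sym2.ext fun g => Set.ext_iff.1 (h.symm.trans h') g)
          ?_ ?_
    _ ≤ Fintype.card (Fin n) - 2 := G.ncard_cycleEdgeSets_le hnr
    _ ≤ n := by rw [Fintype.card_fin]; omega
  · rintro _ ⟨e, f, rfl, he, hf, hef⟩
    obtain ⟨E, hE, hEc⟩ := exists_mem_cycleEdgeSets_sdiff_eq_pair hn₁ hsub he hf hef
    exact ⟨E, hE, by rw [hEc]; ext; simp⟩
  · rintro _ ⟨e, f, rfl, he, hf, hcr⟩
    obtain ⟨E₁, h₁, E₂, h₂, hne, hc₁, hc₂⟩ :=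
      exists_ne_mem_cycleEdgeSets_of_crossing hn₁ hsub he hf hcr
    exact ⟨E₁, h₁, E₂, h₂, hne, by rw [hc₁]; ext; simp, by rw [hc₂]; ext; simp⟩
end
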